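/- Let F be a field, R = F⟨x,y⟩ the free associative F-algebra on x, y, and for each n ≥ 1 let Pₙ be the two-sided ideal generated by {x·yⁱ·x : 0 ≤ i ≤ n−1}. Then P₁ ⊆ P₂ ⊆ ⋯ is an ascending chain, the union ⋃ₙ Pₙ equals (RxR)², the square of the two-sided ideal generated by x, and this union is not semiprime: xRx ⊆ ⋃ₙ Pₙ but x ∉ ⋃ₙ Pₙ. -/
import Mathlib


/-- The product of two two-sided ideals: the two-sided ideal generated by
products `a * b` with `a ∈ I`, `b ∈ J`. -/
def mulTSI {R : Type*} [Ring R] (I J : TwoSidedIdeal R) : TwoSidedIdeal R :=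
  TwoSidedIdeal.span {z | ∃ a ∈ I, ∃ b ∈ J, z = a * b}

/-- The generator `x` of the free algebra `F⟨x,y⟩`. -/
noncomputable def Xgen (F : Type*) [Field F] : FreeAlgebra F (Fin 2) :=
  FreeAlgebra.ι F (0 : Fin 2)

/-- The generator `y` of the free algebra `F⟨x,y⟩`. -/
noncomputable def Ygen (F : Type*) [Field F] : FreeAlgebra F (Fin 2) :=
  FreeAlgebra.ι F (1 : Fin 2)

/-- The ideal `Pₙ = ⟨x yⁱ x : 0 ≤ i ≤ n-1⟩` of `F⟨x,y⟩`. -/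
noncomputable def Pn (F : Type*) [Field F] (n : ℕ) : TwoSidedIdeal (FreeAlgebra F (Fin 2)) :=
  TwoSidedIdeal.span {m | ∃ i < n, m = Xgen F * (Ygen F) ^ i * Xgen F}

/-- The union of the chain `P₁ ⊆ P₂ ⊆ ⋯` (as a set). -/
noncomputable def UPn (F : Type*) [Field F] : Set (FreeAlgebra F (Fin 2)) :=
  ⋃ n : ℕ, ⋃ (_ : 1 ≤ n), (Pn F n : Set (FreeAlgebra F (Fin 2)))

section aux
open Pointwise

variable (F : Type*) [Field F]

lemma Pn_mono : Monotone (Pn F) := by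
  intro m n hmn
  apply TwoSidedIdeal.span_mono
  rintro z ⟨i, hi, rfl⟩
  exact ⟨i, lt_of_lt_of_le hi hmn, rfl⟩

variable {F}

lemma mem_UPn {z : FreeAlgebra F (Fin 2)} :
    z ∈ UPn F ↔ ∃ n, 1 ≤ n ∧ z ∈ Pn F n := by
  simp [UPn, Set.mem_iUnion]

lemma UPn_zero : (0 : FreeAlgebra F (Fin 2)) ∈ UPn F :=
  mem_UPn.2 ⟨1, le_refl _, (Pn F 1).zero_mem⟩

lemma UPn_add {a b : FreeAlgebra F (Fin 2)} (ha : a ∈ UPn F) (hb : b ∈ UPn F) :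
    a + b ∈ UPn F := by
  obtain ⟨m, hm1, hm⟩ := mem_UPn.1 ha
  obtain ⟨n, hn1, hn⟩ := mem_UPn.1 hb
  exact mem_UPn.2 ⟨max m n, le_trans hm1 (le_max_left _ _),
    (Pn F (max m n)).add_mem (Pn_mono F (le_max_left m n) hm)
      (Pn_mono F (le_max_right m n) hn)⟩

lemma UPn_neg {a : FreeAlgebra F (Fin 2)} (ha : a ∈ UPn F) : -a ∈ UPn F := by
  obtain ⟨m, hm1, hm⟩ := mem_UPn.1 ha
  exact mem_UPn.2 ⟨m, hm1, (Pn F m).neg_mem hm⟩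

lemma UPn_mul_left {a : FreeAlgebra F (Fin 2)} (r : FreeAlgebra F (Fin 2)) (ha : a ∈ UPn F) :
    r * a ∈ UPn F := by
  obtain ⟨m, hm1, hm⟩ := mem_UPn.1 ha
  exact mem_UPn.2 ⟨m, hm1, (Pn F m).mul_mem_left _ _ hm⟩

lemma UPn_mul_right {a : FreeAlgebra F (Fin 2)} (r : FreeAlgebra F (Fin 2)) (ha : a ∈ UPn F) :
    a * r ∈ UPn F := by
  obtain ⟨m, hm1, hm⟩ := mem_UPn.1 ha
  exact mem_UPn.2 ⟨m, hm1, (Pn F m).mul_mem_right _ _ hm⟩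

/-- `UPn` as a two-sided ideal. -/
noncomputable def UIdeal (F : Type*) [Field F] : TwoSidedIdeal (FreeAlgebra F (Fin 2)) :=
  TwoSidedIdeal.mk' (UPn F) UPn_zero UPn_add UPn_neg
    (fun h => UPn_mul_left _ h) (fun h => UPn_mul_right _ h)

lemma mem_UIdeal {z : FreeAlgebra F (Fin 2)} : z ∈ UIdeal F ↔ z ∈ UPn F :=
  TwoSidedIdeal.mem_mk' _ _ _ _ _ _ _

lemma word_mem : ∀ (w : List (Fin 2)) (i : ℕ),
    Xgen F * (Ygen F) ^ i * (w.map (FreeAlgebra.ι F)).prod * Xgen F ∈ UPn F := by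
  intro w
  induction w with
  | nil =>
    intro i
    refine mem_UPn.2 ⟨i + 1, Nat.succ_le_succ (Nat.zero_le _), ?_⟩
    have : Xgen F * (Ygen F) ^ i * (List.map (FreeAlgebra.ι F) []).prod * Xgen F
        = Xgen F * (Ygen F) ^ i * Xgen F := by simp
    rw [this]
    exact TwoSidedIdeal.subset_span ⟨i, Nat.lt_succ_self i, rfl⟩
  | cons a w ih =>
    intro i
    fin_cases a
    · -- a = 0, the letter x
      show Xgen F * (Ygen F) ^ i * (List.map (FreeAlgebra.ι F) ((0 : Fin 2) :: w)).prod * Xgen F ∈ UPn F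
      have h1 : Xgen F * (Ygen F) ^ i * (List.map (FreeAlgebra.ι F) (0 :: w)).prod * Xgen F
          = (Xgen F * (Ygen F) ^ i * Xgen F) * ((List.map (FreeAlgebra.ι F) w).prod * Xgen F) := by
        simp only [List.map_cons, List.prod_cons]
        show Xgen F * Ygen F ^ i * (Xgen F * _) * Xgen F = _
        noncomm_ring
      rw [h1]
      refine mem_UPn.2 ⟨i + 1, Nat.succ_le_succ (Nat.zero_le _), ?_⟩
      exact (Pn F (i+1)).mul_mem_right _ _
        (TwoSidedIdeal.subset_span ⟨i, Nat.lt_succ_self i, rfl⟩)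
    · -- a = 1, the letter y
      show Xgen F * (Ygen F) ^ i * (List.map (FreeAlgebra.ι F) ((1 : Fin 2) :: w)).prod * Xgen F ∈ UPn F
      have h1 : Xgen F * (Ygen F) ^ i * (List.map (FreeAlgebra.ι F) (1 :: w)).prod * Xgen F
          = Xgen F * (Ygen F) ^ (i+1) * (List.map (FreeAlgebra.ι F) w).prod * Xgen F := by
        simp only [List.map_cons, List.prod_cons, pow_succ]
        show Xgen F * Ygen F ^ i * (Ygen F * _) * Xgen F = _
        noncomm_ring
      rw [h1]
      exact ih (i + 1)

lemma mem_monomial_span (r : FreeAlgebra F (Fin 2)) :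
    r ∈ Submodule.span F
      {m : FreeAlgebra F (Fin 2) | ∃ w : List (Fin 2), m = (w.map (FreeAlgebra.ι F)).prod} := by
  set S : Set (FreeAlgebra F (Fin 2)) :=
    {m : FreeAlgebra F (Fin 2) | ∃ w : List (Fin 2), m = (w.map (FreeAlgebra.ι F)).prod} with hS
  induction r using FreeAlgebra.induction with
  | grade0 c =>
    rw [Algebra.algebraMap_eq_smul_one]
    exact Submodule.smul_mem _ _ (Submodule.subset_span ⟨[], by simp⟩)
  | grade1 i =>
    exact Submodule.subset_span ⟨[i], by simp⟩
  | mul a b ha hb =>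
    have hSS : S * S ⊆ S := by
      rintro z ⟨m1, ⟨w1, rfl⟩, m2, ⟨w2, rfl⟩, rfl⟩
      exact ⟨w1 ++ w2, by simp⟩
    have : Submodule.span F S * Submodule.span F S ≤ Submodule.span F S := by
      rw [Submodule.span_mul_span]
      exact Submodule.span_le.2 (hSS.trans Submodule.subset_span)
    exact this (Submodule.mul_mem_mul ha hb)
  | add a b ha hb =>
    exact Submodule.add_mem _ ha hb

lemma keyK (r : FreeAlgebra F (Fin 2)) : Xgen F * r * Xgen F ∈ UPn F := by
  have h := mem_monomial_span (F := F) r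
  induction h using Submodule.span_induction with
  | mem m hm =>
    obtain ⟨w, rfl⟩ := hm
    have := word_mem (F := F) w 0
    simpa using this
  | zero => simpa using UPn_zero
  | add a b _ _ ha hb =>
    have : Xgen F * (a + b) * Xgen F = Xgen F * a * Xgen F + Xgen F * b * Xgen F := by
      noncomm_ring
    rw [this]; exact UPn_add ha hb
  | smul c a _ ha =>
    have h2 : Xgen F * (c • a) * Xgen F = c • (Xgen F * a * Xgen F) := by
      rw [mul_smul_comm, smul_mul_assoc]
    rw [h2, Algebra.smul_def]
    exact UPn_mul_left _ ha

lemma keyB {b : FreeAlgebra F (Fin 2)} (hb : b ∈ TwoSidedIdeal.span {Xgen F}) :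
    ∀ r, Xgen F * r * b ∈ UPn F := by
  have := TwoSidedIdeal.mem_span_iff.1 hb
    (TwoSidedIdeal.mk' {b | ∀ r, Xgen F * r * b ∈ UPn F}
      (by intro r; simpa using UPn_zero)
      (by intro x y hx hy r
          have : Xgen F * r * (x + y) = Xgen F * r * x + Xgen F * r * y := by noncomm_ring
          rw [this]; exact UPn_add (hx r) (hy r))
      (by intro x hx r
          have : Xgen F * r * (-x) = -(Xgen F * r * x) := by noncomm_ring
          rw [this]; exact UPn_neg (hx r))
      (by intro s x hx r
          have : Xgen F * r * (s * x) = Xgen F * (r * s) * x := by noncomm_ring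
          rw [this]; exact hx (r * s))
      (by intro x s hx r
          have : Xgen F * r * (x * s) = (Xgen F * r * x) * s := by noncomm_ring
          rw [this]; exact UPn_mul_right _ (hx r)))
    (by rintro z rfl; exact (TwoSidedIdeal.mem_mk' _ _ _ _ _ _ _).2 (fun r => keyK r))
  exact (TwoSidedIdeal.mem_mk' _ _ _ _ _ _ _).1 this

lemma keyA {a b : FreeAlgebra F (Fin 2)} (ha : a ∈ TwoSidedIdeal.span {Xgen F})
    (hb : b ∈ TwoSidedIdeal.span {Xgen F}) : a * b ∈ UPn F := by
  have := TwoSidedIdeal.mem_span_iff.1 ha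
    (TwoSidedIdeal.mk'
      {a | ∀ b ∈ TwoSidedIdeal.span {Xgen F}, a * b ∈ UPn F}
      (by intro b _; simpa using UPn_zero)
      (by intro x y hx hy b hbmem
          rw [add_mul]; exact UPn_add (hx b hbmem) (hy b hbmem))
      (by intro x hx b hbmem
          rw [neg_mul]; exact UPn_neg (hx b hbmem))
      (by intro s x hx b hbmem
          rw [mul_assoc]; exact UPn_mul_left _ (hx b hbmem))
      (by intro x s hx b hbmem
          rw [mul_assoc]
          exact hx (s * b) (TwoSidedIdeal.mul_mem_left _ _ _ hbmem)))
    (by rintro z rfl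
        refine (TwoSidedIdeal.mem_mk' _ _ _ _ _ _ _).2 (fun b hbmem => ?_)
        have := keyB hbmem 1
        simpa using this)
  exact (TwoSidedIdeal.mem_mk' _ _ _ _ _ _ _).1 this b hb

end aux

/-- The chain `P₁ ⊆ P₂ ⊆ ⋯` is ascending, its union equals `(RxR)²`, and the union is
not semiprime: `xRx ⊆ ⋃ₙ Pₙ` while `x ∉ ⋃ₙ Pₙ`. -/
theorem stmt_2 (F : Type*) [Field F] :
    Monotone (Pn F) ∧
    UPn F = ↑(mulTSI (TwoSidedIdeal.span {Xgen F}) (TwoSidedIdeal.span {Xgen F})) ∧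
    (∀ r : FreeAlgebra F (Fin 2), Xgen F * r * Xgen F ∈ UPn F) ∧
    Xgen F ∉ UPn F := by
  refine ⟨Pn_mono F, ?_, fun r => keyK r, ?_⟩
  · apply Set.Subset.antisymm
    · -- UPn ⊆ mulTSI
      intro z hz
      obtain ⟨n, _, hn⟩ := mem_UPn.1 hz
      refine TwoSidedIdeal.mem_span_iff.1 hn (mulTSI _ _) ?_
      rintro w ⟨i, _, rfl⟩
      refine TwoSidedIdeal.subset_span ?_
      exact ⟨Xgen F, TwoSidedIdeal.subset_span rfl,
        (Ygen F) ^ i * Xgen F,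
        TwoSidedIdeal.mul_mem_left _ _ _ (TwoSidedIdeal.subset_span rfl),
        by noncomm_ring⟩
    · -- mulTSI ⊆ UPn
      intro z hz
      have : z ∈ UIdeal F := by
        refine TwoSidedIdeal.mem_span_iff.1 hz (UIdeal F) ?_
        rintro w ⟨a, ha, b, hb, rfl⟩
        exact mem_UIdeal.2 (keyA ha hb)
      exact mem_UIdeal.1 this
  · -- Xgen ∉ UPn
    intro hx
    obtain ⟨n, _, hn⟩ := mem_UPn.1 hx
    classical
    let φ : FreeAlgebra F (Fin 2) →ₐ[F] DualNumber F :=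
      FreeAlgebra.lift F ![DualNumber.eps, 1]
    have hker : Xgen F ∈ TwoSidedIdeal.ker φ.toRingHom := by
      refine TwoSidedIdeal.mem_span_iff.1 hn _ ?_
      rintro w ⟨i, _, rfl⟩
      simp only [SetLike.mem_coe, TwoSidedIdeal.mem_ker]
      have hx' : φ (Xgen F) = DualNumber.eps := by
        simp [φ, Xgen, FreeAlgebra.lift_ι_apply]
      have hy' : φ (Ygen F) = 1 := by
        simp [φ, Ygen, FreeAlgebra.lift_ι_apply]
      show φ _ = 0
      rw [map_mul, map_mul, map_pow, hx', hy', one_pow, mul_one, DualNumber.eps_mul_eps]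
    rw [TwoSidedIdeal.mem_ker] at hker
    have hx' : φ (Xgen F) = DualNumber.eps := by
      simp [φ, Xgen, FreeAlgebra.lift_ι_apply]
    have hker' : (DualNumber.eps : DualNumber F) = 0 := by rw [← hx']; exact hker
    have : (DualNumber.eps : DualNumber F).snd = (0 : DualNumber F).snd := by rw [hker']
    simp [DualNumber.snd_eps] at this
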